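/- arXiv:1908.01460 — 2 statements merged into one kernel-verified Lean document; each statement's English description precedes it below -/
import Mathlib

section
/- Let R_o, R_d have joint density f(r_o,r_d) = (2πρλ)² r_o r_d exp(−πρλ r_d²) on 0 ≤ r_o ≤ r_d. Then conditioned on the event {R_o ≤ τ R_d}, the CDF of R_o is F(r) = 1 − exp(−πρλ r²/τ²) for r > 0. -/
/-!
The function `x * exp (-b * x ^ 2)` has the antiderivative `-exp (-b * x ^ 2) / (2 * b)`.
Integrating out `R_d` over `(r_o / τ, ∞)` therefore leaves the Rayleigh-type marginal
`2a r_o exp (-(a / τ²) r_o²)` with `a = πρλ`, of total mass `τ²`, and its integral over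
`(0, r]` is `τ² (1 - exp (-a r² / τ²))`.
-/

open MeasureTheory Set Real Filter Topology

variable {a b τ r : ℝ}

lemma hasDerivAt_antideriv_mul_exp_neg_mul_sq (hb : b ≠ 0) (x : ℝ) :
    HasDerivAt (fun x => -(2 * b)⁻¹ * exp (-b * x ^ 2)) (x * exp (-b * x ^ 2)) x := by
  refine (((hasDerivAt_pow 2 x).const_mul (-b)).exp.const_mul (-(2 * b)⁻¹)).congr_deriv ?_
  field_simp
  ring

lemma intervalIntegral_mul_exp_neg_mul_sq (hb : b ≠ 0) (r : ℝ) :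
    ∫ x in (0 : ℝ)..r, x * exp (-b * x ^ 2) = (1 - exp (-b * r ^ 2)) / (2 * b) := by
  rw [intervalIntegral.integral_eq_sub_of_hasDerivAt
    (fun x _ => hasDerivAt_antideriv_mul_exp_neg_mul_sq hb x)
    ((by fun_prop : Continuous fun x : ℝ => x * exp (-b * x ^ 2)).intervalIntegrable _ _)]
  simp only [ne_eq, OfNat.ofNat_ne_zero, not_false_eq_true, zero_pow, mul_zero, exp_zero]
  field_simp
  ring

lemma integral_Ioi_mul_exp_neg_mul_sq (hb : 0 < b) (c : ℝ) :
    ∫ x in Ioi c, x * exp (-b * x ^ 2) = exp (-b * c ^ 2) / (2 * b) := by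
  have hlim : Tendsto (fun x : ℝ => -(2 * b)⁻¹ * exp (-b * x ^ 2)) atTop (𝓝 (-(2 * b)⁻¹ * 0)) :=
    (tendsto_exp_atBot.comp ((tendsto_pow_atTop two_ne_zero).const_mul_atTop_of_neg
      (neg_lt_zero.2 hb))).const_mul _
  rw [integral_Ioi_of_hasDerivAt_of_tendsto'
    (fun x _ => hasDerivAt_antideriv_mul_exp_neg_mul_sq hb.ne' x)
    (integrable_mul_exp_neg_mul_sq hb).integrableOn hlim]
  field_simp
  ring

lemma integral_Ioi_joint_density (ha : 0 < a) (ro : ℝ) :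
    ∫ rd in Ioi (ro / τ), (2 * a) ^ 2 * ro * rd * exp (-a * rd ^ 2)
      = 2 * a * (ro * exp (-(a / τ ^ 2) * ro ^ 2)) := by
  simp_rw [mul_assoc _ _ (exp _), integral_const_mul, integral_Ioi_mul_exp_neg_mul_sq ha]
  field_simp

lemma integral_Ioc_integral_Ioi_joint_density_div_sq (ha : 0 < a) (hτ : τ ≠ 0) (hr : 0 ≤ r) :
    (∫ ro in Ioc 0 r, ∫ rd in Ioi (ro / τ), (2 * a) ^ 2 * ro * rd * exp (-a * rd ^ 2)) / τ ^ 2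
      = 1 - exp (-a * r ^ 2 / τ ^ 2) := by
  simp_rw [integral_Ioi_joint_density ha, ← intervalIntegral.integral_of_le hr,
    intervalIntegral.integral_const_mul,
    intervalIntegral_mul_exp_neg_mul_sq (by positivity : a / τ ^ 2 ≠ 0)]
  field_simp

/-- Conditioned on the CC event `{R_o ≤ τ R_d}` (of probability τ²), the CDF of the
service link distance `R_o` is `F(r) = 1 − exp(−πρλ r²/τ²)` for `r > 0`. -/
theorem cc_user_Ro_cdf (ρ l τ : ℝ) (hρ : 0 < ρ) (hl : 0 < l)
    (hτ : τ ∈ Set.Ioo (0 : ℝ) 1) (r : ℝ) (hr : 0 < r) :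
    (∫ ro in Ioc (0 : ℝ) r, ∫ rd in Ioi (ro / τ),
        (2 * π * ρ * l) ^ 2 * ro * rd * Real.exp (-(π * ρ * l) * rd ^ 2)) / τ ^ 2
      = 1 - Real.exp (-(π * ρ * l) * r ^ 2 / τ ^ 2) := by
  rw [show 2 * π * ρ * l = 2 * (π * ρ * l) by ring]
  exact integral_Ioc_integral_Ioi_joint_density_div_sq (by positivity) hτ.1.ne' hr.le
end

section
/- Let R_o, R_d have joint density f(r_o,r_d) = (2πρλ)² r_o r_d exp(−πρλ r_d²) on 0 ≤ r_o ≤ r_d, and τ ∈ (0,1). Conditioned on the event {R_o > τ R_d}, the CDF of R_o is F(r) = 1 − [1 − τ² exp(−πρλ r²(τ^{−2} − 1))] / [(1 − τ²) exp(πρλ r²)] for r > 0. -/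
open MeasureTheory Set Real

/-! Integrating out `R_d` over `[R_o, R_o/τ)` leaves `R_o` with density
`2a r (e^{-a r²} - e^{-(a/τ²) r²})`, `a = πρλ`, a difference of two Rayleigh-type densities
whose integrals over `(0, r]` are `1 - e^{-a r²}` and `τ² (1 - e^{-(a/τ²) r²})`. -/

theorem integral_mul_exp_neg_mul_sq {a : ℝ} (ha : a ≠ 0) (b c : ℝ) :
    ∫ x in b..c, x * exp (-a * x ^ 2) = (exp (-a * b ^ 2) - exp (-a * c ^ 2)) / (2 * a) := by
  have hderiv : ∀ x ∈ uIcc b c,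
      HasDerivAt (fun x => -exp (-a * x ^ 2) / (2 * a)) (x * exp (-a * x ^ 2)) x := by
    intro x _
    have hquad : HasDerivAt (fun x : ℝ => -a * x ^ 2) (-a * (2 * x)) x := by
      simpa using (hasDerivAt_pow 2 x).const_mul (-a)
    refine (hquad.exp.neg.div_const (2 * a)).congr_deriv ?_
    field_simp
  have hint : IntervalIntegrable (fun x => x * exp (-a * x ^ 2)) volume b c :=
    (by fun_prop : Continuous fun x : ℝ => x * exp (-a * x ^ 2)).intervalIntegrable b c
  rw [intervalIntegral.integral_eq_sub_of_hasDerivAt hderiv hint]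
  ring

theorem setIntegral_Ico_const_mul_mul_exp_neg_mul_sq {a : ℝ} (ha : a ≠ 0) (k : ℝ) {b c : ℝ}
    (hbc : b ≤ c) :
    ∫ x in Ico b c, k * x * exp (-a * x ^ 2)
      = k * (exp (-a * b ^ 2) - exp (-a * c ^ 2)) / (2 * a) := by
  simp_rw [integral_Ico_eq_integral_Ioc, ← intervalIntegral.integral_of_le hbc, mul_assoc k,
    intervalIntegral.integral_const_mul, integral_mul_exp_neg_mul_sq ha, mul_div_assoc]

/-- Conditioned on the CE event `{R_o > τ R_d}` (of probability 1 − τ²), the CDF of `R_o`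
is `F(r) = 1 − [1 − τ² exp(−πρλ r²(τ⁻² − 1))] / [(1 − τ²) exp(πρλ r²)]` for `r > 0`. -/
theorem ce_user_Ro_cdf (ρ l τ : ℝ) (hρ : 0 < ρ) (hl : 0 < l)
    (hτ : τ ∈ Set.Ioo (0 : ℝ) 1) (r : ℝ) (hr : 0 < r) :
    (∫ ro in Ioc (0 : ℝ) r, ∫ rd in Ico ro (ro / τ),
        (2 * π * ρ * l) ^ 2 * ro * rd * Real.exp (-(π * ρ * l) * rd ^ 2)) / (1 - τ ^ 2)
      = 1 - (1 - τ ^ 2 * Real.exp (-(π * ρ * l) * r ^ 2 * ((τ ^ 2)⁻¹ - 1)))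
          / ((1 - τ ^ 2) * Real.exp ((π * ρ * l) * r ^ 2)) := by
  obtain ⟨hτ0, hτ1⟩ := hτ
  set a := π * ρ * l with ha_def
  have ha : 0 < a := by positivity
  have haτ : 0 < a / τ ^ 2 := by positivity
  have inner : ∀ ro ∈ Ioc (0 : ℝ) r,
      ∫ rd in Ico ro (ro / τ), (2 * π * ρ * l) ^ 2 * ro * rd * exp (-a * rd ^ 2)
        = 2 * a * (ro * exp (-a * ro ^ 2)) - 2 * a * (ro * exp (-(a / τ ^ 2) * ro ^ 2)) := by
    intro ro hro
    have hle : ro ≤ ro / τ := le_div_self hro.1.le hτ0 hτ1.le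
    rw [setIntegral_Ico_const_mul_mul_exp_neg_mul_sq ha.ne' _ hle, div_pow,
      show -a * (ro ^ 2 / τ ^ 2) = -(a / τ ^ 2) * ro ^ 2 by ring, ha_def]
    field_simp
  have hint (b : ℝ) : IntervalIntegrable (fun x => 2 * a * (x * exp (-b * x ^ 2))) volume 0 r :=
    Continuous.intervalIntegrable (by fun_prop) 0 r
  rw [setIntegral_congr_fun measurableSet_Ioc inner, ← intervalIntegral.integral_of_le hr.le,
    intervalIntegral.integral_sub (hint a) (hint _), intervalIntegral.integral_const_mul,
    intervalIntegral.integral_const_mul, integral_mul_exp_neg_mul_sq ha.ne',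
    integral_mul_exp_neg_mul_sq haτ.ne']
  have hexp :
      exp (-a * r ^ 2 * ((τ ^ 2)⁻¹ - 1)) = exp (-(a / τ ^ 2) * r ^ 2) * exp (a * r ^ 2) := by
    rw [← exp_add]
    congr 1
    ring
  have h1τ : 1 - τ ^ 2 ≠ 0 := by nlinarith
  simp only [ne_eq, OfNat.ofNat_ne_zero, not_false_eq_true, zero_pow, mul_zero, exp_zero]
  rw [hexp, neg_mul a, exp_neg]
  field_simp
  ring
end
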